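/- arXiv:1406.6463 — 7 statements merged into one kernel-verified Lean document; each statement's English description precedes it below -/
import Mathlib

section
/- If Y is a random variable on the nonnegative integers with P(Y = j) = μ_j > 0 for all j and finite mean, then for every bounded function g: ℤ≥0 → ℝ, the expectation E[((j+1)μ_{j+1}/μ_j) g(Y+1) - Y g(Y)] equals 0. -/
/-! With `f j = j μ_j g(j)`, the `j`-th summand is `f (j + 1) - f j`. Finite mean and
boundedness of `g` make `f` summable, so the series telescopes to `-f 0 = 0`. -/

theorem Summable.tsum_succ_sub {G : Type*} [AddCommGroup G] [TopologicalSpace G]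
    [IsTopologicalAddGroup G] [T2Space G] {f : ℕ → G} (hf : Summable f) :
    ∑' n, (f (n + 1) - f n) = -f 0 := by
  rw [((summable_nat_add_iff 1).mpr hf).tsum_sub hf, hf.tsum_eq_zero_add]
  abel

theorem Summable.mul_of_norm_bounded {R ι : Type*} [NormedRing R] [CompleteSpace R]
    {a b : ι → R} {C : ℝ} (ha : Summable fun i => ‖a i‖) (hb : ∀ i, ‖b i‖ ≤ C) :
    Summable fun i => a i * b i :=
  .of_norm_bounded (ha.mul_right C) fun i =>
    (norm_mul_le _ _).trans (mul_le_mul_of_nonneg_left (hb i) (norm_nonneg _))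

theorem stein_operator_general_pmf_general (μ : ℕ → ℝ) (g : ℕ → ℝ)
    (hpos : ∀ j, 0 < μ j)
    (hmean : Summable (fun j : ℕ => (j : ℝ) * μ j))
    (hg : ∃ C, ∀ j, |g j| ≤ C) :
    ∑' j : ℕ, μ j * ((((j : ℝ) + 1) * μ (j + 1) / μ j) * g (j + 1) - (j : ℝ) * g j) = 0 := by
  obtain ⟨C, hC⟩ := hg
  set f : ℕ → ℝ := fun j => (j : ℝ) * μ j * g j
  have hf : Summable f := hmean.norm.mul_of_norm_bounded hC
  have hterm (j : ℕ) :
      μ j * ((((j : ℝ) + 1) * μ (j + 1) / μ j) * g (j + 1) - (j : ℝ) * g j) = f (j + 1) - f j := by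
    simp only [f, Nat.cast_succ]
    field_simp [(hpos j).ne']
  simp only [hterm, hf.tsum_succ_sub, f, CharP.cast_eq_zero, zero_mul, neg_zero]

/-- Stein identity from the ratio `(j+1) μ_{j+1} / μ_j`: for a `ℤ≥0`-valued random
variable `Y` with pmf `μ`, positive everywhere, with finite mean, and any bounded
`g`, `E[((Y+1) μ_{Y+1}/μ_Y) g(Y+1) - Y g(Y)] = 0`. -/
theorem stein_operator_general_pmf (μ : ℕ → ℝ) (g : ℕ → ℝ)
    (hpos : ∀ j, 0 < μ j) (hsum : HasSum μ 1)
    (hmean : Summable (fun j : ℕ => (j : ℝ) * μ j))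
    (hg : ∃ C, ∀ j, |g j| ≤ C) :
    ∑' j : ℕ, μ j * ((((j : ℝ) + 1) * μ (j + 1) / μ j) * g (j + 1) - (j : ℝ) * g j) = 0 :=
  stein_operator_general_pmf_general μ g hpos hmean hg
end

section
/- Let Y₄ be a compound Poisson random variable with PGF exp(∑_{j≥1} λ_j (z^j - 1)), λ_j ≥ 0, ∑ j λ_j < ∞ and E Y₄ < ∞. Then for every bounded g: ℤ≥0 → ℝ, E[∑_{l=1}^∞ l λ_l g(Y₄ + l) - Y₄ g(Y₄)] = 0. -/
/-!
Write `F z = ∑ μ_k z^k` and `G z = ∑ λ_j (z^j - 1)`. Differentiating `F = exp ∘ G` inside the unit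
interval gives `F' = F G'`, and comparing the coefficients of these two power series yields the
Panjer recursion `(n + 1) μ_{n+1} = ∑_{k+l=n} μ_k (l + 1) λ_{l+1}`. Rearranging the absolutely
convergent double series `∑_{j,l} μ_j (l + 1) λ_{l+1} g (j + l + 1)` along antidiagonals and
applying the recursion turns it into `∑_n (n + 1) μ_{n+1} g (n + 1) = ∑_j j μ_j g j`.
-/

open Filter Finset Topology FormalMultilinearSeries

lemma summable_of_summable_natCast_mul {c : ℕ → ℝ} (hc : Summable fun n : ℕ => (n : ℝ) * c n) :
    Summable c := by
  refine (summable_nat_add_iff 1).mp <|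
    .of_norm_bounded ((summable_nat_add_iff 1).mpr hc).norm fun n => ?_
  rw [norm_mul, Real.norm_natCast]
  exact le_mul_of_one_le_left (norm_nonneg _) (Nat.one_le_cast.mpr n.succ_pos)

lemma summable_succ_mul_succ {c : ℕ → ℝ} (hc : Summable fun n : ℕ => (n : ℝ) * c n) :
    Summable fun n : ℕ => ((n : ℝ) + 1) * c (n + 1) := by
  simpa using (summable_nat_add_iff 1).mpr hc

lemma Summable.mul_pow_of_abs_le_one {c : ℕ → ℝ} (hc : Summable c) {x : ℝ} (hx : |x| ≤ 1) :
    Summable fun n => c n * x ^ n :=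
  .of_norm_bounded hc.norm fun n => by
    rw [norm_mul, norm_pow]
    exact mul_le_of_le_one_right (norm_nonneg _) (pow_le_one₀ (norm_nonneg _) hx)

lemma hasDerivAt_tsum_mul_pow {c : ℕ → ℝ} (hc : Summable fun n : ℕ => (n : ℝ) * c n) {x : ℝ}
    (hx : |x| < 1) :
    HasDerivAt (fun z => ∑' n, c n * z ^ n) (∑' n : ℕ, ((n : ℝ) + 1) * c (n + 1) * x ^ n) x := by
  have hbound : ∀ n (y : ℝ), y ∈ Set.Ioo (-1) 1 →
      ‖c n * ((n : ℝ) * y ^ (n - 1))‖ ≤ ‖(n : ℝ) * c n‖ := by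
    intro n y hy
    simp only [mul_left_comm (c n), norm_mul, norm_pow]
    rw [← mul_assoc]
    exact mul_le_of_le_one_right (by positivity)
      (pow_le_one₀ (norm_nonneg _) (abs_lt.mpr hy).le)
  have hderiv := hasDerivAt_tsum_of_isPreconnected hc.norm isOpen_Ioo
    (convex_Ioo _ _).isPreconnected (fun n y _ => (hasDerivAt_pow n y).const_mul (c n)) hbound
    (⟨by norm_num, by norm_num⟩ : (0 : ℝ) ∈ Set.Ioo (-1) 1)
    ((summable_of_summable_natCast_mul hc).mul_pow_of_abs_le_one (by simp)) (abs_lt.mp hx)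
  refine hderiv.congr_deriv ?_
  rw [(Summable.of_norm_bounded hc.norm fun n => hbound n x (abs_lt.mp hx)).tsum_eq_zero_add]
  simp only [CharP.cast_eq_zero, zero_mul, mul_zero, zero_add, Nat.cast_add, Nat.cast_one,
    add_tsub_cancel_right]
  exact tsum_congr fun n => by ring

lemma eq_zero_of_tsum_mul_pow_eventually_eq_zero {c : ℕ → ℝ} (hc : Summable c)
    (h : ∀ᶠ x in 𝓝 0, ∑' n, c n * x ^ n = 0) : c = 0 := by
  have hradius : (1 : ENNReal) ≤ (ofScalars ℝ c).radius := by
    simpa using (ofScalars ℝ c).le_radius_of_summable (r := 1) (by simpa using hc.norm)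
  have hp :=
    ((ofScalars ℝ c).hasFPowerSeriesOnBall (zero_lt_one.trans_le hradius)).hasFPowerSeriesAt
  refine (ofScalars_series_eq_zero ℝ).mp (hp.eq_zero_of_eventually ?_)
  change ofScalarsSum c =ᶠ[𝓝 0] 0
  simpa [ofScalarsSum_eq_tsum, EventuallyEq] using h

lemma tsum_mul_pow_mul_tsum_mul_pow {a b : ℕ → ℝ} (ha : Summable a) (hb : Summable b) {x : ℝ}
    (hx : |x| ≤ 1) :
    (∑' n, a n * x ^ n) * (∑' n, b n * x ^ n) =
      ∑' n, (∑ p ∈ antidiagonal n, a p.1 * b p.2) * x ^ n := by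
  rw [tsum_mul_tsum_eq_tsum_sum_antidiagonal_of_summable_norm
    (ha.mul_pow_of_abs_le_one hx).norm (hb.mul_pow_of_abs_le_one hx).norm]
  refine tsum_congr fun n => ?_
  rw [sum_mul]
  refine sum_congr rfl fun p hp => ?_
  rw [← mem_antidiagonal.mp hp, pow_add]
  ring

lemma tsum_prod_eq_tsum_sum_antidiagonal {f : ℕ × ℕ → ℝ} (hf : Summable f) :
    ∑' p, f p = ∑' n, ∑ p ∈ antidiagonal n, f p := by
  rw [← HasAntidiagonal.sigmaAntidiagonalEquivProd.tsum_eq]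
  refine ((HasAntidiagonal.sigmaAntidiagonalEquivProd.summable_iff.mpr hf).tsum_sigma'
      fun n => (hasSum_fintype _).summable).trans ?_
  exact tsum_congr fun n => by rw [tsum_fintype]; exact sum_coe_sort _ f

lemma hasSum_mul_tsum_mul_comp_add {a b h : ℕ → ℝ} (ha : Summable a) (hb : Summable b) {C : ℝ}
    (hh : ∀ n, |h n| ≤ C) :
    HasSum (fun j => a j * ∑' l, b l * h (j + l))
      (∑' n, (∑ p ∈ antidiagonal n, a p.1 * b p.2) * h n) := by
  have hprod : Summable fun p : ℕ × ℕ => a p.1 * b p.2 * h (p.1 + p.2) :=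
    .of_norm_bounded ((ha.norm.mul_norm hb.norm).mul_right C) fun p => by
      rw [norm_mul (a p.1 * b p.2)]
      exact mul_le_mul_of_nonneg_left (hh _) (norm_nonneg _)
  have hinner : (fun j => a j * ∑' l, b l * h (j + l)) = fun j => ∑' l, a j * b l * h (j + l) :=
    funext fun j => by simp_rw [← tsum_mul_left, mul_assoc]
  have hvalue : ∑' n, (∑ p ∈ antidiagonal n, a p.1 * b p.2) * h n =
      ∑' j, ∑' l, a j * b l * h (j + l) := by
    rw [← hprod.tsum_prod' hprod.prod_factor, tsum_prod_eq_tsum_sum_antidiagonal hprod]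
    refine tsum_congr fun n => ?_
    rw [sum_mul]
    exact sum_congr rfl fun p hp => by rw [mem_antidiagonal.mp hp]
  rw [hinner, hvalue]
  exact hprod.prod.hasSum

theorem panjer_recursion {μ lam : ℕ → ℝ} (hlam : Summable fun j : ℕ => (j : ℝ) * lam j)
    (hmean : Summable fun k : ℕ => (k : ℝ) * μ k)
    (hpgf : ∀ z : ℝ, |z| < 1 → ∑' k, μ k * z ^ k = Real.exp (∑' j, lam j * (z ^ j - 1)))
    (n : ℕ) :
    ((n : ℝ) + 1) * μ (n + 1) =
      ∑ p ∈ antidiagonal n, μ p.1 * (((p.2 : ℝ) + 1) * lam (p.2 + 1)) := by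
  set a : ℕ → ℝ := fun l => ((l : ℝ) + 1) * lam (l + 1)
  set b : ℕ → ℝ := fun n => ∑ p ∈ antidiagonal n, μ p.1 * a p.2
  have hμ := summable_of_summable_natCast_mul hmean
  have ha : Summable a := summable_succ_mul_succ hlam
  have hb : Summable b :=
    (summable_norm_sum_mul_antidiagonal_of_summable_norm hμ.norm ha.norm).of_norm
  have hderiv : ∀ x : ℝ, |x| < 1 →
      ∑' n : ℕ, ((n : ℝ) + 1) * μ (n + 1) * x ^ n = ∑' n, b n * x ^ n := by
    intro x hx
    have hnhds : ∀ᶠ z in 𝓝 x, |z| < 1 :=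
      continuous_abs.continuousAt.eventually_lt continuousAt_const hx
    have hG : HasDerivAt (fun z => ∑' j, lam j * (z ^ j - 1)) (∑' l, a l * x ^ l) x := by
      refine ((hasDerivAt_tsum_mul_pow hlam hx).sub_const (∑' j, lam j)).congr_of_eventuallyEq ?_
      filter_upwards [hnhds] with z hz
      rw [← ((summable_of_summable_natCast_mul hlam).mul_pow_of_abs_le_one hz.le).tsum_sub
        (summable_of_summable_natCast_mul hlam)]
      simp_rw [mul_sub, mul_one]
    have hF := (hasDerivAt_tsum_mul_pow hmean hx).unique
      (hG.exp.congr_of_eventuallyEq (by filter_upwards [hnhds] with z hz using hpgf z hz))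
    rw [hF, ← hpgf x hx, tsum_mul_pow_mul_tsum_mul_pow hμ ha hx.le]
  have hcoeff := eq_zero_of_tsum_mul_pow_eventually_eq_zero
    ((summable_succ_mul_succ hmean).sub hb) ?_
  · exact sub_eq_zero.mp (congrFun hcoeff n)
  filter_upwards [continuous_abs.continuousAt.eventually_lt continuousAt_const
    (by simp : |(0 : ℝ)| < 1)] with x hx
  simp_rw [sub_mul]
  rw [((summable_succ_mul_succ hmean).mul_pow_of_abs_le_one hx.le).tsum_sub
    (hb.mul_pow_of_abs_le_one hx.le), hderiv x hx, sub_self]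

theorem stein_operator_compound_poisson_general (μ lam : ℕ → ℝ)
    (hlamsum : Summable (fun j : ℕ => (j : ℝ) * lam j))
    (hpgf : ∀ z : ℝ, |z| ≤ 1 →
      ∑' k : ℕ, μ k * z ^ k = Real.exp (∑' j : ℕ, lam j * (z ^ j - 1)))
    (hmean : Summable (fun j : ℕ => (j : ℝ) * μ j))
    (g : ℕ → ℝ) (hg : ∃ C, ∀ j, |g j| ≤ C) :
    ∑' j : ℕ, μ j *
      ((∑' l : ℕ, ((l : ℝ) + 1) * lam (l + 1) * g (j + l + 1)) - (j : ℝ) * g j) = 0 := by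
  obtain ⟨C, hC⟩ := hg
  have hleft := hasSum_mul_tsum_mul_comp_add (summable_of_summable_natCast_mul hmean)
    (summable_succ_mul_succ hlamsum) (h := fun n => g (n + 1)) fun n => hC (n + 1)
  simp_rw [← panjer_recursion hlamsum hmean fun z hz => hpgf z hz.le] at hleft
  have hright : HasSum (fun j : ℕ => μ j * ((j : ℝ) * g j))
      (∑' n : ℕ, ((n : ℝ) + 1) * μ (n + 1) * g (n + 1)) := by
    have hs : Summable fun j : ℕ => μ j * ((j : ℝ) * g j) :=
      .of_norm_bounded (hmean.norm.mul_right C) fun j => by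
        rw [mul_left_comm, ← mul_assoc, norm_mul (_ * _)]
        exact mul_le_mul_of_nonneg_left (hC j) (norm_nonneg _)
    refine (hasSum_nat_add_iff' 1).mp ?_
    simpa [mul_left_comm, mul_assoc] using ((summable_nat_add_iff 1).mpr hs).hasSum
  simpa [mul_sub] using (hleft.sub hright).tsum_eq

/-- Stein identity for the compound Poisson distribution: if `Y₄` has pmf `μ` with
PGF `exp (∑_{j≥1} λ_j (z^j - 1))`, `λ_j ≥ 0`, `∑ j λ_j < ∞`, finite mean, then for
bounded `g`, `E[∑_{l≥1} l λ_l g(Y₄ + l) - Y₄ g(Y₄)] = 0`. -/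
theorem stein_operator_compound_poisson (μ lam : ℕ → ℝ)
    (hlam0 : lam 0 = 0) (hlam : ∀ j, 0 ≤ lam j)
    (hlamsum : Summable (fun j : ℕ => (j : ℝ) * lam j))
    (hμ : ∀ j, 0 ≤ μ j)
    (hpgf : ∀ z : ℝ, |z| ≤ 1 →
      ∑' k : ℕ, μ k * z ^ k = Real.exp (∑' j : ℕ, lam j * (z ^ j - 1)))
    (hmean : Summable (fun j : ℕ => (j : ℝ) * μ j))
    (g : ℕ → ℝ) (hg : ∃ C, ∀ j, |g j| ≤ C) :
    ∑' j : ℕ, μ j *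
      ((∑' l : ℕ, ((l : ℝ) + 1) * lam (l + 1) * g (j + l + 1)) - (j : ℝ) * g j) = 0 :=
  stein_operator_compound_poisson_general μ lam hlamsum hpgf hmean g hg
end

section
/- Let Y = Y₂ + Y₃ with Y₂ ~ Binomial(M, p) and Y₃ ~ NegativeBinomial(r, p̄) independent, and set μ_k = P(Y = k). Then for every k ∈ ℤ≥0 (with μ_{-1} := 0): μ_k (M p + r q q̄ - p k + q q̄ k) + μ_{k-1} (r p q̄ - M p q̄ + p q̄ (k-1)) - q (k+1) μ_{k+1} = 0, where q = 1 - p and q̄ = 1 - p̄. -/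
/-!
Write `μ_k = ∑_{i+j=k} b_i g_j` with `b_i = C(M,i) pⁱ q^(M-i)` and `g_j` the negative binomial
weights. Both factors satisfy first-order recurrences,
`q (i+1) b_{i+1} = p (M-i) b_i` and `(j+1) g_{j+1} = (r+j) q̄ g_j`.
Splitting `k μ_k = A_k + B_k` into the moments `A_k = ∑ i b_i g_j` and `B_k = ∑ j b_i g_j`,
these recurrences become `q A_{k+1} = p (M μ_k - A_k)` and `B_{k+1} = q̄ (r μ_k + B_k)`,
and eliminating `A` and `B` gives the three-term recurrence for `μ`.
-/

open Finset

theorem Nat.cast_choose_succ_mul {R : Type*} [Ring R] (n k : ℕ) :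
    (n.choose (k + 1) : R) * (k + 1) = n.choose k * (n - k) := by
  rcases le_or_gt k n with hkn | hnk
  · rw [← Nat.cast_sub hkn]
    exact_mod_cast congrArg (Nat.cast : ℕ → R) (Nat.choose_succ_right_eq n k)
  · simp [Nat.choose_eq_zero_of_lt hnk, Nat.choose_eq_zero_of_lt (Nat.lt_succ_of_lt hnk)]

theorem binomial_weight_succ {R : Type*} [CommRing R] (M i : ℕ) (p q : R) :
    q * (i + 1) * (M.choose (i + 1) * p ^ (i + 1) * q ^ (M - (i + 1))) =
      p * (M - i) * (M.choose i * p ^ i * q ^ (M - i)) := by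
  have hchoose := Nat.cast_choose_succ_mul (R := R) M i
  rcases lt_or_ge i M with hiM | hMi
  · obtain ⟨d, rfl⟩ : ∃ d, M = i + 1 + d := ⟨M - (i + 1), by omega⟩
    rw [show i + 1 + d - (i + 1) = d by omega, show i + 1 + d - i = d + 1 by omega]
    linear_combination (p ^ (i + 1) * q ^ (d + 1)) * hchoose
  · rw [Nat.choose_eq_zero_of_lt (by omega : M < i + 1), Nat.cast_zero] at hchoose ⊢
    rw [zero_mul] at hchoose
    linear_combination (p * p ^ i * q ^ (M - i)) * hchoose

theorem negBinomial_weight_succ {r : ℝ} (C c : ℝ) {j : ℕ} (hrj : r + j ≠ 0) :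
    ((j : ℝ) + 1) * (Real.Gamma (r + (j + 1 : ℕ)) / (Real.Gamma r * (j + 1).factorial) *
        C * c ^ (j + 1)) =
      (r + j) * c * (Real.Gamma (r + j) / (Real.Gamma r * j.factorial) * C * c ^ j) := by
  have hGamma : Real.Gamma (r + (j + 1 : ℕ)) = (r + j) * Real.Gamma (r + j) := by
    rw [Nat.cast_succ, ← add_assoc, Real.Gamma_add_one hrj]
  have hj : (j.factorial : ℝ) ≠ 0 := by positivity
  rw [hGamma, Nat.factorial_succ, Nat.cast_mul, Nat.cast_succ, pow_succ]
  field_simp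

section Convolution

variable {M r p q c : ℝ} {b g : ℕ → ℝ}

theorem sum_antidiagonal_succ_fst_mul
    (hb : ∀ i : ℕ, q * (i + 1) * b (i + 1) = p * (M - i) * b i) (n : ℕ) :
    q * ∑ x ∈ antidiagonal (n + 1), (x.1 : ℝ) * (b x.1 * g x.2) =
      p * ∑ x ∈ antidiagonal n, (M - x.1) * (b x.1 * g x.2) := by
  rw [Nat.sum_antidiagonal_succ, mul_add, mul_sum, mul_sum]
  simp only [Nat.cast_zero, zero_mul, mul_zero, zero_add, Nat.cast_succ]
  exact sum_congr rfl fun x _ ↦ by linear_combination g x.2 * hb x.1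

theorem sum_antidiagonal_succ_snd_mul
    (hg : ∀ j : ℕ, ((j : ℝ) + 1) * g (j + 1) = (r + j) * c * g j) (n : ℕ) :
    ∑ x ∈ antidiagonal (n + 1), (x.2 : ℝ) * (b x.1 * g x.2) =
      c * ∑ x ∈ antidiagonal n, (r + x.2) * (b x.1 * g x.2) := by
  rw [Nat.sum_antidiagonal_succ', mul_sum]
  simp only [Nat.cast_zero, zero_mul, zero_add, Nat.cast_succ]
  exact sum_congr rfl fun x _ ↦ by linear_combination b x.1 * hg x.2

theorem three_term_recurrence_of_convolution {μ : ℕ → ℝ}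
    (hb : ∀ i : ℕ, q * (i + 1) * b (i + 1) = p * (M - i) * b i)
    (hg : ∀ j : ℕ, ((j : ℝ) + 1) * g (j + 1) = (r + j) * c * g j)
    (hμ : ∀ n, μ n = ∑ x ∈ antidiagonal n, b x.1 * g x.2) (k : ℕ) :
    μ k * (M * p + r * q * c - p * k + q * c * k) +
        (if k = 0 then 0 else μ (k - 1)) * (r * p * c - M * p * c + p * c * ((k : ℝ) - 1)) -
      q * ((k : ℝ) + 1) * μ (k + 1) = 0 := by
  set A : ℕ → ℝ := fun n ↦ ∑ x ∈ antidiagonal n, (x.1 : ℝ) * (b x.1 * g x.2)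
  set B : ℕ → ℝ := fun n ↦ ∑ x ∈ antidiagonal n, (x.2 : ℝ) * (b x.1 * g x.2)
  have hAB : ∀ n, A n + B n = n * μ n := fun n ↦ by
    rw [hμ, mul_sum, ← sum_add_distrib]
    refine sum_congr rfl fun x hx ↦ ?_
    rw [← mem_antidiagonal.mp hx, Nat.cast_add]
    ring
  have hA : ∀ n, q * A (n + 1) = p * (M * μ n - A n) := fun n ↦ by
    simp only [A, sum_antidiagonal_succ_fst_mul hb, hμ, mul_sum, ← sum_sub_distrib, sub_mul]
  have hB : ∀ n, B (n + 1) = c * (r * μ n + B n) := fun n ↦ by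
    simp only [B, sum_antidiagonal_succ_snd_mul hg, hμ, mul_sum, ← sum_add_distrib, add_mul]
  cases k with
  | zero =>
    have hA0 : A 0 = 0 := by simp [A]
    have hB0 : B 0 = 0 := by simp [B]
    rw [if_pos rfl]
    push_cast
    linear_combination q * hAB 1 - hA 0 - q * hB 0 + p * hA0 - q * c * hB0
  | succ m =>
    rw [if_neg m.succ_ne_zero, Nat.add_sub_cancel]
    linear_combination (norm := (push_cast; ring))
      q * hAB (m + 2) - hA (m + 1) - q * hB (m + 1) + (p - q * c) * hAB (m + 1) - p * hB m + c * hA m - p * c * hAB m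

end Convolution

theorem binomial_negative_binomial_convolution_recursion_general
    (M : ℕ) (p q r pbar qbar : ℝ)
    (hr : 0 < r)
    (μ : ℕ → ℝ)
    (hμ : ∀ k, μ k = ∑ i ∈ Finset.range (k + 1),
      ((M.choose i : ℝ) * p ^ i * q ^ (M - i)) *
        (Real.Gamma (r + (k - i : ℕ)) / (Real.Gamma r * (Nat.factorial (k - i))) *
          pbar ^ r * qbar ^ (k - i))) :
    ∀ k : ℕ,
      μ k * ((M : ℝ) * p + r * q * qbar - p * k + q * qbar * k) +
        (if k = 0 then 0 else μ (k - 1)) *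
          (r * p * qbar - (M : ℝ) * p * qbar + p * qbar * ((k : ℝ) - 1)) -
        q * ((k : ℝ) + 1) * μ (k + 1) = 0 :=
  three_term_recurrence_of_convolution
    (b := fun i ↦ (M.choose i : ℝ) * p ^ i * q ^ (M - i))
    (g := fun j ↦ Real.Gamma (r + j) / (Real.Gamma r * j.factorial) * pbar ^ r * qbar ^ j)
    (fun i ↦ binomial_weight_succ M i p q)
    (fun j ↦ negBinomial_weight_succ _ qbar (by positivity))
    (fun n ↦ by rw [hμ, Nat.sum_antidiagonal_eq_sum_range_succ
      (fun i j ↦ (M.choose i : ℝ) * p ^ i * q ^ (M - i) *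
        (Real.Gamma (r + j) / (Real.Gamma r * j.factorial) * pbar ^ r * qbar ^ j))])

/-- Recursion for the probabilities of the convolution of a binomial `Bi(M,p)` and
an independent negative binomial `NB(r,p̄)` random variable:
`μ_k (Mp + rqq̄ - pk + qq̄k) + μ_{k-1} (rpq̄ - Mpq̄ + pq̄(k-1)) - q(k+1)μ_{k+1} = 0`,
with `μ_{-1} := 0`. -/
theorem binomial_negative_binomial_convolution_recursion
    (M : ℕ) (hM : 0 < M) (p q r pbar qbar : ℝ)
    (hp0 : 0 < p) (hp1 : p < 1) (hq : q = 1 - p)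
    (hr : 0 < r) (hpb0 : 0 < pbar) (hpb1 : pbar < 1) (hqb : qbar = 1 - pbar)
    (μ : ℕ → ℝ)
    (hμ : ∀ k, μ k = ∑ i ∈ Finset.range (k + 1),
      ((M.choose i : ℝ) * p ^ i * q ^ (M - i)) *
        (Real.Gamma (r + (k - i : ℕ)) / (Real.Gamma r * (Nat.factorial (k - i))) *
          pbar ^ r * qbar ^ (k - i))) :
    ∀ k : ℕ,
      μ k * ((M : ℝ) * p + r * q * qbar - p * k + q * qbar * k) +
        (if k = 0 then 0 else μ (k - 1)) *
          (r * p * qbar - (M : ℝ) * p * qbar + p * qbar * ((k : ℝ) - 1)) -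
        q * ((k : ℝ) + 1) * μ (k + 1) = 0 :=
  binomial_negative_binomial_convolution_recursion_general M p q r pbar qbar hr μ hμ
end

section
/- Let Y = Y₂ + Y₃ with Y₂ ~ Binomial(M, p) and Y₃ ~ NegativeBinomial(r, p̄) independent. Then for every bounded g: ℤ≥0 → ℝ, E[(Mp + r q q̄ - p Y + q q̄ Y) g(Y+1) + (r q̄ p - M p q̄ + p q̄ Y) g(Y+2) - q Y g(Y)] = 0, where q = 1-p, q̄ = 1 - p̄. -/
/-!
The binomial weights `b` and the negative binomial weights `n` satisfy the first-order recurrences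
`q (i+1) b(i+1) = (M - i) p b(i)` and `(j+1) n(j+1) = (r + j) q̄ n(j)`. Writing `k = i + j` inside
the convolution `f = b ∗ n` and applying one recurrence to `∑ i b(i) n(j)` and the other to
`∑ b(i) j n(j)` eliminates both auxiliary sums and leaves the second-order recurrence
`q (k+2) f(k+2) = A(k+1) f(k+1) + B(k) f(k)`, with `q f(1) = A(0) f(0)`, where `A` and `B` are
the coefficients of `g(Y+1)` and `g(Y+2)` in the Stein operator. Shifting the index in
`∑ q k f(k) g(k)` then cancels it against the other two sums, all three of which converge because
`f` has finite mean (the ratio test for `n`) and `g` is bounded.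
-/

open Finset Filter Topology

noncomputable section

def cauchyProduct {R : Type*} [Semiring R] (x y : ℕ → R) (n : ℕ) : R :=
  ∑ ij ∈ antidiagonal n, x ij.1 * y ij.2

section CauchyProductAlgebra

variable {R : Type*} [CommRing R]

theorem cauchyProduct_comm (x y : ℕ → R) (n : ℕ) : cauchyProduct x y n = cauchyProduct y x n := by
  rw [cauchyProduct, cauchyProduct, ← Nat.sum_antidiagonal_swap]
  simp only [Prod.fst_swap, Prod.snd_swap, mul_comm]

theorem cauchyProduct_succ (x y : ℕ → R) (n : ℕ) :
    cauchyProduct x y (n + 1) = x 0 * y (n + 1) + cauchyProduct (fun i => x (i + 1)) y n :=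
  Nat.sum_antidiagonal_succ

theorem natCast_mul_cauchyProduct (x y : ℕ → R) (n : ℕ) :
    (n : R) * cauchyProduct x y n =
      cauchyProduct (fun i => (i : R) * x i) y n + cauchyProduct x (fun j => (j : R) * y j) n := by
  simp only [cauchyProduct, mul_sum, ← sum_add_distrib]
  refine sum_congr rfl fun ij hij => ?_
  rw [← mem_antidiagonal.mp hij]
  push_cast
  ring

theorem mul_cauchyProduct_natCast_mul_left_succ {x : ℕ → R} {a b c : R}
    (hx : ∀ i : ℕ, c * ((i : R) + 1) * x (i + 1) = (a + b * i) * x i) (y : ℕ → R) (n : ℕ) :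
    c * cauchyProduct (fun i => (i : R) * x i) y (n + 1) =
      a * cauchyProduct x y n + b * cauchyProduct (fun i => (i : R) * x i) y n := by
  rw [cauchyProduct_succ]
  simp only [cauchyProduct, Nat.cast_zero, zero_mul, zero_add, mul_sum, ← sum_add_distrib]
  refine sum_congr rfl fun ij _ => ?_
  push_cast
  linear_combination y ij.2 * hx ij.1

theorem cauchyProduct_natCast_mul_right_succ {y : ℕ → R} {a b : R}
    (hy : ∀ j : ℕ, ((j : R) + 1) * y (j + 1) = (a + b * j) * y j) (x : ℕ → R) (n : ℕ) :
    cauchyProduct x (fun j => (j : R) * y j) (n + 1) =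
      a * cauchyProduct x y n + b * cauchyProduct x (fun j => (j : R) * y j) n := by
  simp only [cauchyProduct_comm x]
  simpa using mul_cauchyProduct_natCast_mul_left_succ (c := 1) (by simpa using hy) x n

end CauchyProductAlgebra

section Recurrence

variable {R : Type*} [CommRing R] {x y : ℕ → R} {a₁ b₁ c a₂ b₂ : R}

theorem mul_succ_mul_cauchyProduct_succ
    (hx : ∀ i : ℕ, c * ((i : R) + 1) * x (i + 1) = (a₁ + b₁ * i) * x i)
    (hy : ∀ j : ℕ, ((j : R) + 1) * y (j + 1) = (a₂ + b₂ * j) * y j) (n : ℕ) :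
    c * ((n : R) + 1) * cauchyProduct x y (n + 1) =
      (a₁ + c * a₂ + c * b₂ * n) * cauchyProduct x y n +
        (b₁ - c * b₂) * cauchyProduct (fun i => (i : R) * x i) y n := by
  have hK := natCast_mul_cauchyProduct x y n
  have hK' := natCast_mul_cauchyProduct x y (n + 1)
  have hS := mul_cauchyProduct_natCast_mul_left_succ hx y n
  have hT := cauchyProduct_natCast_mul_right_succ hy x n
  push_cast at hK'
  linear_combination c * hK' + hS + c * hT - c * b₂ * hK

theorem mul_cauchyProduct_one
    (hx : ∀ i : ℕ, c * ((i : R) + 1) * x (i + 1) = (a₁ + b₁ * i) * x i)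
    (hy : ∀ j : ℕ, ((j : R) + 1) * y (j + 1) = (a₂ + b₂ * j) * y j) :
    c * cauchyProduct x y 1 = (a₁ + c * a₂) * cauchyProduct x y 0 := by
  simpa [cauchyProduct] using mul_succ_mul_cauchyProduct_succ hx hy 0

theorem mul_succ_succ_mul_cauchyProduct_succ_succ
    (hx : ∀ i : ℕ, c * ((i : R) + 1) * x (i + 1) = (a₁ + b₁ * i) * x i)
    (hy : ∀ j : ℕ, ((j : R) + 1) * y (j + 1) = (a₂ + b₂ * j) * y j) (n : ℕ) :
    c * ((n : R) + 2) * cauchyProduct x y (n + 2) =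
      (a₁ + c * a₂ + (c * b₂ + b₁) * (n + 1)) * cauchyProduct x y (n + 1) -
        (a₁ * b₂ + a₂ * b₁ + b₁ * b₂ * n) * cauchyProduct x y n := by
  have h := mul_succ_mul_cauchyProduct_succ hx hy (n + 1)
  have hK := natCast_mul_cauchyProduct x y n
  have hK' := natCast_mul_cauchyProduct x y (n + 1)
  have hS := mul_cauchyProduct_natCast_mul_left_succ hx y n
  have hT := cauchyProduct_natCast_mul_right_succ hy x n
  push_cast at h hK'
  linear_combination h - b₁ * hK' - b₁ * hT - b₂ * hS + b₁ * b₂ * hK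

end Recurrence

section Weights

def binomialWeight {R : Type*} [CommRing R] (M : ℕ) (p q : R) (i : ℕ) : R :=
  M.choose i * p ^ i * q ^ (M - i)

def negBinomialWeight (r pbar qbar : ℝ) (j : ℕ) : ℝ :=
  Real.Gamma (r + j) / (Real.Gamma r * j.factorial) * pbar ^ r * qbar ^ j

theorem binomialWeight_eq_zero_of_lt {R : Type*} [CommRing R] {M i : ℕ} (p q : R) (h : M < i) :
    binomialWeight M p q i = 0 := by
  simp [binomialWeight, Nat.choose_eq_zero_of_lt h]

theorem binomialWeight_succ {R : Type*} [CommRing R] (M : ℕ) (p q : R) (i : ℕ) :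
    q * ((i : R) + 1) * binomialWeight M p q (i + 1) =
      ((M : R) - i) * p * binomialWeight M p q i := by
  rcases lt_or_ge i M with h | h
  · have hchoose : (M.choose (i + 1) : R) * ((i : R) + 1) = M.choose i * ((M : R) - i) := by
      have h' := congrArg (Nat.cast (R := R)) (Nat.choose_succ_right_eq M i)
      push_cast [Nat.cast_sub h.le] at h'
      exact h'
    obtain ⟨m, rfl⟩ := Nat.exists_eq_add_of_lt h
    simp only [binomialWeight, show i + m + 1 - i = m + 1 by omega,
      show i + m + 1 - (i + 1) = m by omega, pow_succ]
    linear_combination p ^ i * p * q ^ m * q * hchoose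
  · rw [binomialWeight_eq_zero_of_lt p q (Nat.lt_succ_of_le h)]
    rcases h.eq_or_lt with rfl | h
    · ring
    · rw [binomialWeight_eq_zero_of_lt p q h]
      ring

theorem binomialWeight_nonneg {p q : ℝ} (hp : 0 ≤ p) (hq : 0 ≤ q) (M i : ℕ) :
    0 ≤ binomialWeight M p q i := by
  unfold binomialWeight
  positivity

theorem summable_binomialWeight (M : ℕ) (p q : ℝ) : Summable (binomialWeight M p q) :=
  summable_of_ne_finset_zero (s := range (M + 1)) fun _ hi =>
    binomialWeight_eq_zero_of_lt p q (by simpa using hi)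

theorem summable_natCast_mul_binomialWeight (M : ℕ) (p q : ℝ) :
    Summable fun i : ℕ => (i : ℝ) * binomialWeight M p q i :=
  summable_of_ne_finset_zero (s := range (M + 1)) fun _ hi => by
    rw [binomialWeight_eq_zero_of_lt p q (by simpa using hi), mul_zero]

theorem negBinomialWeight_succ {r : ℝ} (hr : 0 < r) (pbar qbar : ℝ) (j : ℕ) :
    ((j : ℝ) + 1) * negBinomialWeight r pbar qbar (j + 1) =
      (r + j) * qbar * negBinomialWeight r pbar qbar j := by
  have hΓ : Real.Gamma (r + ((j : ℝ) + 1)) = (r + j) * Real.Gamma (r + j) := by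
    rw [← add_assoc, Real.Gamma_add_one (by positivity)]
  simp only [negBinomialWeight, Nat.factorial_succ, Nat.cast_mul, Nat.cast_succ, pow_succ]
  rw [hΓ]
  field_simp

theorem negBinomialWeight_pos {r pbar qbar : ℝ} (hr : 0 < r) (hpbar : 0 < pbar) (hqbar : 0 < qbar)
    (j : ℕ) : 0 < negBinomialWeight r pbar qbar j := by
  have := Real.Gamma_pos_of_pos hr
  have := Real.Gamma_pos_of_pos (add_pos_of_pos_of_nonneg hr j.cast_nonneg)
  unfold negBinomialWeight
  positivity

end Weights

section Summability

theorem summable_natCast_mul_of_succ_mul_eq {y : ℕ → ℝ} {a b : ℝ} (hy : ∀ j, 0 < y j)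
    (hb : b < 1) (hrec : ∀ j : ℕ, ((j : ℝ) + 1) * y (j + 1) = (a + b * j) * y j) :
    Summable fun j : ℕ => (j : ℝ) * y j := by
  refine summable_of_ratio_test_tendsto_lt_one hb ?_ ?_
  · filter_upwards [eventually_ge_atTop 1] with j hj
    exact mul_ne_zero (by positivity) (hy j).ne'
  · have hratio : ∀ᶠ j : ℕ in atTop,
        a / j + b = ‖((j + 1 : ℕ) : ℝ) * y (j + 1)‖ / ‖(j : ℝ) * y j‖ := by
      filter_upwards [eventually_ge_atTop 1] with j hj
      have hj' : (0 : ℝ) < j := by exact_mod_cast hj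
      have := hy j
      have := hy (j + 1)
      rw [Real.norm_of_nonneg (by positivity), Real.norm_of_nonneg (by positivity),
        Nat.cast_succ, hrec]
      field_simp
    simpa using ((tendsto_const_div_atTop_nhds_zero_nat a).add_const b).congr' hratio

theorem Summable.of_natCast_mul {y : ℕ → ℝ} (hy : ∀ j, 0 ≤ y j)
    (h : Summable fun j : ℕ => (j : ℝ) * y j) : Summable y := by
  rw [← summable_nat_add_iff 1]
  refine ((summable_nat_add_iff 1).2 h).of_nonneg_of_le (fun j => hy _) fun j => ?_
  exact le_mul_of_one_le_left (hy _) (by simp)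

theorem cauchyProduct_nonneg {x y : ℕ → ℝ} (hx0 : ∀ i, 0 ≤ x i) (hy0 : ∀ j, 0 ≤ y j) (n : ℕ) :
    0 ≤ cauchyProduct x y n :=
  sum_nonneg fun ij _ => mul_nonneg (hx0 ij.1) (hy0 ij.2)

theorem summable_cauchyProduct {x y : ℕ → ℝ} (hx0 : ∀ i, 0 ≤ x i) (hy0 : ∀ j, 0 ≤ y j)
    (hx : Summable x) (hy : Summable y) : Summable (cauchyProduct x y) :=
  summable_sum_mul_antidiagonal_of_summable_mul (hx.mul_of_nonneg hy hx0 hy0)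

theorem summable_natCast_mul_cauchyProduct {x y : ℕ → ℝ} (hx0 : ∀ i, 0 ≤ x i)
    (hy0 : ∀ j, 0 ≤ y j) (hx : Summable x) (hy : Summable y)
    (hix : Summable fun i : ℕ => (i : ℝ) * x i) (hjy : Summable fun j : ℕ => (j : ℝ) * y j) :
    Summable fun n : ℕ => (n : ℝ) * cauchyProduct x y n := by
  simp only [natCast_mul_cauchyProduct]
  exact (summable_cauchyProduct (fun i => mul_nonneg i.cast_nonneg (hx0 i)) hy0 hix hy).add
    (summable_cauchyProduct hx0 (fun j => mul_nonneg j.cast_nonneg (hy0 j)) hx hjy)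

end Summability

section SteinIdentity

theorem tsum_add_sub_eq_zero_of_shift {G : Type*} [AddCommGroup G] [TopologicalSpace G]
    [IsTopologicalAddGroup G] [T2Space G] {u v w : ℕ → G}
    (hu : Summable u) (hv : Summable v) (hw : Summable w) (hw₀ : w 0 = 0) (hu₀ : u 0 = w 1)
    (hshift : ∀ k, u (k + 1) + v k = w (k + 2)) :
    ∑' k, (u k + v k - w k) = 0 := by
  have hu' := hu.sum_add_tsum_nat_add 1
  have hw' := hw.sum_add_tsum_nat_add 2
  have hu1 := (summable_nat_add_iff 1).2 hu
  simp only [sum_range_succ, sum_range_zero, zero_add, ← hshift] at hu' hw'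
  rw [hu.add hv |>.tsum_sub hw, hu.tsum_add hv, ← hu', ← hw', hu1.tsum_add hv, hw₀, hu₀]
  abel

theorem summable_mul_affine_mul {z φ : ℕ → ℝ} (hz0 : ∀ k, 0 ≤ z k) (hz : Summable z)
    (hkz : Summable fun k : ℕ => (k : ℝ) * z k) {C : ℝ} (hφ : ∀ k, |φ k| ≤ C) (a b : ℝ) :
    Summable fun k : ℕ => z k * (a + b * k) * φ k := by
  refine .of_norm_bounded ((hz.mul_left (|a| * C)).add (hkz.mul_left (|b| * C))) fun k => ?_
  have haff : |a + b * k| ≤ |a| + |b| * k := by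
    simpa [abs_mul] using abs_add_le a (b * k)
  calc ‖z k * (a + b * k) * φ k‖ = z k * |a + b * k| * |φ k| := by
        rw [Real.norm_eq_abs, abs_mul, abs_mul, abs_of_nonneg (hz0 k)]
    _ ≤ z k * (|a| + |b| * k) * C := by
        have := hz0 k
        gcongr
        exact hφ k
    _ = |a| * C * z k + |b| * C * (k * z k) := by ring

theorem tsum_mul_stein_eq_zero_of_recurrence {z g : ℕ → ℝ} {C γ α₀ α₁ β₀ β₁ : ℝ}
    (hz0 : ∀ k, 0 ≤ z k) (hz : Summable z) (hkz : Summable fun k : ℕ => (k : ℝ) * z k)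
    (hg : ∀ j, |g j| ≤ C) (h₁ : γ * z 1 = α₀ * z 0)
    (hrec : ∀ k : ℕ, γ * ((k : ℝ) + 2) * z (k + 2) =
      (α₀ + α₁ * (k + 1)) * z (k + 1) + (β₀ + β₁ * k) * z k) :
    ∑' k : ℕ, z k * ((α₀ + α₁ * k) * g (k + 1) + (β₀ + β₁ * k) * g (k + 2) - γ * k * g k) = 0 := by
  have key := tsum_add_sub_eq_zero_of_shift
    (u := fun k => z k * (α₀ + α₁ * k) * g (k + 1))
    (v := fun k => z k * (β₀ + β₁ * k) * g (k + 2))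
    (w := fun k => z k * (0 + γ * k) * g k)
    (summable_mul_affine_mul hz0 hz hkz (fun k => hg (k + 1)) _ _)
    (summable_mul_affine_mul hz0 hz hkz (fun k => hg (k + 2)) _ _)
    (summable_mul_affine_mul hz0 hz hkz hg _ _) (by simp)
    (by push_cast; linear_combination -g 1 * h₁)
    (fun k => by push_cast; linear_combination -g (k + 2) * hrec k)
  rw [← key]
  exact tsum_congr fun k => by ring

end SteinIdentity

end

theorem stein_operator_binomial_negative_binomial_convolution_general
    (M : ℕ) (p q r pbar qbar : ℝ)
    (hp0 : 0 < p) (hp1 : p < 1) (hq : q = 1 - p)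
    (hr : 0 < r) (hpb0 : 0 < pbar) (hpb1 : pbar < 1) (hqb : qbar = 1 - pbar)
    (g : ℕ → ℝ) (hg : ∃ C, ∀ j, |g j| ≤ C) :
    ∑' k : ℕ,
      (∑ i ∈ Finset.range (k + 1),
        ((M.choose i : ℝ) * p ^ i * q ^ (M - i)) *
          (Real.Gamma (r + (k - i : ℕ)) / (Real.Gamma r * (Nat.factorial (k - i))) *
            pbar ^ r * qbar ^ (k - i))) *
      (((M : ℝ) * p + r * q * qbar - p * k + q * qbar * k) * g (k + 1) +
        (r * qbar * p - (M : ℝ) * p * qbar + p * qbar * k) * g (k + 2) -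
        q * (k : ℝ) * g k) = 0 := by
  obtain ⟨C, hC⟩ := hg
  set x := binomialWeight M p q
  set y := negBinomialWeight r pbar qbar
  have hx0 : ∀ i, 0 ≤ x i := binomialWeight_nonneg hp0.le (by linarith) M
  have hy0 : ∀ j, 0 < y j := negBinomialWeight_pos hr hpb0 (by linarith)
  have hxrec (i : ℕ) : q * ((i : ℝ) + 1) * x (i + 1) = (M * p + -p * i) * x i := by
    linear_combination binomialWeight_succ M p q i
  have hyrec (j : ℕ) : ((j : ℝ) + 1) * y (j + 1) = (r * qbar + qbar * j) * y j := by
    linear_combination negBinomialWeight_succ hr pbar qbar j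
  have hjy := summable_natCast_mul_of_succ_mul_eq hy0 (by linarith) hyrec
  have hy := hjy.of_natCast_mul fun j => (hy0 j).le
  have hz (k : ℕ) : ∑ i ∈ range (k + 1), x i * y (k - i) = cauchyProduct x y k :=
    (Nat.sum_antidiagonal_eq_sum_range_succ (fun i j => x i * y j) k).symm
  refine (tsum_congr fun k => ?_).trans <| tsum_mul_stein_eq_zero_of_recurrence
    (α₀ := M * p + r * q * qbar) (α₁ := q * qbar - p)
    (β₀ := r * qbar * p - M * p * qbar) (β₁ := p * qbar)
    (cauchyProduct_nonneg hx0 (fun j => (hy0 j).le))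
    (summable_cauchyProduct hx0 (fun j => (hy0 j).le) (summable_binomialWeight M p q) hy)
    (summable_natCast_mul_cauchyProduct hx0 (fun j => (hy0 j).le) (summable_binomialWeight M p q)
      hy (summable_natCast_mul_binomialWeight M p q) hjy)
    hC ((mul_cauchyProduct_one hxrec hyrec).trans (by ring))
    (fun k => (mul_succ_succ_mul_cauchyProduct_succ_succ hxrec hyrec k).trans (by ring))
  change (∑ i ∈ range (k + 1), x i * y (k - i)) * _ = _
  rw [hz]
  ring

/-- Stein identity for the convolution `Y = Y₂ + Y₃` of a binomial `Bi(M,p)` and an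
independent negative binomial `NB(r,p̄)`: for every bounded `g`,
`E[(Mp + rqq̄ - pY + qq̄Y) g(Y+1) + (rq̄p - Mpq̄ + pq̄Y) g(Y+2) - qY g(Y)] = 0`. -/
theorem stein_operator_binomial_negative_binomial_convolution
    (M : ℕ) (hM : 0 < M) (p q r pbar qbar : ℝ)
    (hp0 : 0 < p) (hp1 : p < 1) (hq : q = 1 - p)
    (hr : 0 < r) (hpb0 : 0 < pbar) (hpb1 : pbar < 1) (hqb : qbar = 1 - pbar)
    (g : ℕ → ℝ) (hg : ∃ C, ∀ j, |g j| ≤ C) :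
    ∑' k : ℕ,
      (∑ i ∈ Finset.range (k + 1),
        ((M.choose i : ℝ) * p ^ i * q ^ (M - i)) *
          (Real.Gamma (r + (k - i : ℕ)) / (Real.Gamma r * (Nat.factorial (k - i))) *
            pbar ^ r * qbar ^ (k - i))) *
      (((M : ℝ) * p + r * q * qbar - p * k + q * qbar * k) * g (k + 1) +
        (r * qbar * p - (M : ℝ) * p * qbar + p * qbar * k) * g (k + 2) -
        q * (k : ℝ) * g k) = 0 :=
  stein_operator_binomial_negative_binomial_convolution_general M p q r pbar qbar hp0 hp1 hq hr hpb0
    hpb1 hqb g hg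
end

section
/- Let N be a ℤ≥0-valued random variable with P(N=k) = μ_k, X₁, X₂, ... i.i.d. ℤ≥0-valued with P(X₁ = k) = p_k, independent of N, and S_N = ∑_{j=1}^N X_j with E S_N < ∞. Writing p_{k,s} = P(X₁+...+X_k = s), the recursion (s+1) ∑_{k=0}^∞ μ_k p_{k,s+1} = ∑_{k=0}^∞ (k+1) μ_{k+1} ∑_{m=0}^{s} p_{k,m} (s-m+1) p_{s-m+1} holds for every s ∈ ℤ≥0. -/
/-!
With `G = ∑ₛ pₛ Xˢ`, the numbers `p_{k,s}` are the coefficients of `Gᵏ`. Comparing the coefficients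
of `Xˢ` in `(G^{k+1})' = (k+1) Gᵏ G'` gives, for each `k`,
`(s+1) p_{k+1,s+1} = (k+1) ∑_{m ≤ s} p_{k,m} (s-m+1) p_{s-m+1}`.
Multiplying by `μ_{k+1}` matches the series on both sides term by term, once the left one is
shifted by one index, which is harmless because `p_{0,s+1} = 0`.
-/

/-- `convPow p k` is the `k`-fold convolution of the pmf `p` on `ℤ≥0`
(`convPow p 0` is the point mass at `0`). -/
def convPow (p : ℕ → ℝ) : ℕ → ℕ → ℝ
  | 0, s => if s = 0 then 1 else 0
  | k + 1, s => ∑ m ∈ Finset.range (s + 1), convPow p k m * p (s - m)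

open Finset PowerSeries

theorem tsum_succ_eq_tsum_of_apply_zero {α : Type*} [AddCommMonoid α] [TopologicalSpace α]
    {f : ℕ → α} (hf : f 0 = 0) : ∑' k, f (k + 1) = ∑' k, f k :=
  Nat.succ_injective.tsum_eq fun k hk => Nat.exists_eq_add_one_of_ne_zero
    (by rintro rfl; exact hk hf) |>.imp fun _ h => h.symm

theorem coeff_mul_eq_sum_range {R : Type*} [CommSemiring R] (f g : R⟦X⟧) (n : ℕ) :
    coeff n (f * g) = ∑ m ∈ range (n + 1), coeff m f * coeff (n - m) g := by
  rw [coeff_mul, Nat.sum_antidiagonal_eq_sum_range_succ_mk]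

theorem convPow_eq_coeff_pow (p : ℕ → ℝ) (k s : ℕ) : convPow p k s = coeff s (mk p ^ k) := by
  induction k generalizing s with
  | zero => simp [convPow, coeff_one]
  | succ k ih => simp only [convPow, ih, pow_succ, coeff_mul_eq_sum_range, coeff_mk]

theorem succ_mul_convPow_succ (p : ℕ → ℝ) (k s : ℕ) :
    ((s : ℝ) + 1) * convPow p (k + 1) (s + 1) =
      ((k : ℝ) + 1) *
        ∑ m ∈ range (s + 1), convPow p k m * ((s - m : ℕ) + 1 : ℝ) * p (s - m + 1) := by
  have h := congrArg (coeff s) (derivative_pow (mk p) (k + 1))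
  rw [Nat.add_sub_cancel, mul_assoc, ← map_natCast C, coeff_C_mul, coeff_derivative,
    coeff_mul_eq_sum_range] at h
  simp only [convPow_eq_coeff_pow, mul_comm ((s : ℝ) + 1), h, coeff_derivative, coeff_mk]
  push_cast
  exact congrArg _ (sum_congr rfl fun m _ => by ring)

theorem compound_distribution_recursion_general (μ p : ℕ → ℝ) :
    ∀ s : ℕ, ((s : ℝ) + 1) * ∑' k : ℕ, μ k * convPow p k (s + 1) =
      ∑' k : ℕ, ((k : ℝ) + 1) * μ (k + 1) *
        ∑ m ∈ Finset.range (s + 1),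
          convPow p k m * ((s - m : ℕ) + 1 : ℝ) * p (s - m + 1) := by
  intro s
  rw [← tsum_mul_left, ← tsum_succ_eq_tsum_of_apply_zero (by simp [convPow])]
  refine tsum_congr fun k => ?_
  rw [mul_left_comm, succ_mul_convPow_succ]
  ring

/-- Recursion (25) for compound distributions: with `N` having pmf `μ`, i.i.d.
summands with pmf `p`, `p_{k,·} = convPow p k`, and `E S_N < ∞`,
`(s+1) ∑_k μ_k p_{k,s+1} = ∑_k (k+1) μ_{k+1} ∑_{m=0}^s p_{k,m} (s-m+1) p_{s-m+1}`. -/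
theorem compound_distribution_recursion (μ p : ℕ → ℝ)
    (hμ0 : ∀ k, 0 ≤ μ k) (hμ1 : HasSum μ 1)
    (hp0 : ∀ k, 0 ≤ p k) (hp1 : HasSum p 1)
    (hmean : Summable (fun s : ℕ => (s : ℝ) * ∑' k : ℕ, μ k * convPow p k s)) :
    ∀ s : ℕ, ((s : ℝ) + 1) * ∑' k : ℕ, μ k * convPow p k (s + 1) =
      ∑' k : ℕ, ((k : ℝ) + 1) * μ (k + 1) *
        ∑ m ∈ Finset.range (s + 1),
          convPow p k m * ((s - m : ℕ) + 1 : ℝ) * p (s - m + 1) :=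
  compound_distribution_recursion_general μ p
end

section
/- Let W = ∑_{j=2}^n X_j (1 − X_{j−1}) with X_i i.i.d. Bernoulli(p*) and a = p*(1 − p*). Then the third central moment is E(W − E W)³ = (n−1) a + (15 − 9n) a² + 4(5n − 11) a³. -/
/-- The probability of the outcome `ω` of `n` independent Bernoulli(`pstar`) trials. -/
def bernoulliSeqProb (n : ℕ) (pstar : ℝ) (ω : Fin n → Bool) : ℝ :=
  ∏ i, (if ω i then pstar else 1 - pstar)

/-- The value (0 or 1) of the `j`-th trial (0-indexed), 0 outside the range. -/
def trialVal (n : ℕ) (ω : Fin n → Bool) (j : ℕ) : ℝ :=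
  if h : j < n then (if ω ⟨j, h⟩ then 1 else 0) else 0

/-- The number of (1,1)-runs `W = ∑_{j=2}^n X_j (1 - X_{j-1})` (0-indexed:
`∑_{j=1}^{n-1} X_j (1 - X_{j-1})`). -/
def runCount (n : ℕ) (ω : Fin n → Bool) : ℝ :=
  ∑ j ∈ Finset.Ico 1 n, trialVal n ω j * (1 - trialVal n ω (j - 1))

/-!
Appending a trial `X_{n+1}` raises `W` by `X_{n+1} (1 - X_n)`, so the moments `E[(W - c)^k]`
and `E[(1 - X_n) (W - c)^k]` of the first `n + 1` trials satisfy a linear recursion in `n`,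
after re-centring binomially at every step. Centred at the mean `n a`, the first moment vanishes,
the second-order quantities become linear in `n`, and the third central moment then grows by
the constant `a - 9 a² + 20 a³` per trial from three trials on.
-/

open Finset

theorem sum_pi_fin_succ_eq_sum_snoc {β M : Type*} [Fintype β] [AddCommMonoid M] (n : ℕ)
    (f : (Fin (n + 1) → β) → M) :
    ∑ ω, f ω = ∑ ω : Fin n → β, ∑ b, f (Fin.snoc ω b) := by
  rw [← (Fin.snocEquiv fun _ => β).sum_comp, Fintype.sum_prod_type_right]
  rfl

theorem bernoulliSeqProb_snoc (n : ℕ) (p : ℝ) (ω : Fin n → Bool) (b : Bool) :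
    bernoulliSeqProb (n + 1) p (Fin.snoc ω b)
      = bernoulliSeqProb n p ω * (if b then p else 1 - p) := by
  simp [bernoulliSeqProb, Fin.prod_univ_castSucc]

theorem trialVal_snoc_of_lt (n : ℕ) (ω : Fin n → Bool) (b : Bool) {j : ℕ} (hj : j < n) :
    trialVal (n + 1) (Fin.snoc ω b) j = trialVal n ω j := by
  simp only [trialVal, dif_pos hj, dif_pos (Nat.lt_succ_of_lt hj)]
  rw [show (⟨j, Nat.lt_succ_of_lt hj⟩ : Fin (n + 1)) = Fin.castSucc ⟨j, hj⟩ from rfl,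
    Fin.snoc_castSucc]

theorem trialVal_snoc_self (n : ℕ) (ω : Fin n → Bool) (b : Bool) :
    trialVal (n + 1) (Fin.snoc ω b) n = if b then 1 else 0 := by
  simp only [trialVal, dif_pos n.lt_succ_self]
  rw [show (⟨n, n.lt_succ_self⟩ : Fin (n + 1)) = Fin.last n from rfl, Fin.snoc_last]

theorem trialVal_eq_zero_or_one (n : ℕ) (ω : Fin n → Bool) (j : ℕ) :
    trialVal n ω j = 0 ∨ trialVal n ω j = 1 := by
  unfold trialVal; split_ifs <;> simp

theorem runCount_snoc (n : ℕ) (ω : Fin (n + 1) → Bool) (b : Bool) :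
    runCount (n + 1 + 1) (Fin.snoc ω b)
      = runCount (n + 1) ω + (if b then 1 else 0) * (1 - trialVal (n + 1) ω n) := by
  rw [runCount, sum_Ico_succ_top (by omega), trialVal_snoc_self, Nat.add_sub_cancel,
    trialVal_snoc_of_lt _ _ _ n.lt_succ_self]
  congr 1
  refine sum_congr rfl fun j hj => ?_
  rw [mem_Ico] at hj
  rw [trialVal_snoc_of_lt _ _ _ hj.2, trialVal_snoc_of_lt _ _ _ (by omega)]

theorem Finset.sum_mul_sub_add_pow {ι R : Type*} [CommRing R] (s : Finset ι) (w x : ι → R)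
    (c d : R) (k : ℕ) :
    ∑ i ∈ s, w i * (x i - (c + d)) ^ k
      = ∑ j ∈ range (k + 1), (k.choose j : R) * (-d) ^ (k - j) * ∑ i ∈ s, w i * (x i - c) ^ j := by
  simp_rw [show ∀ i, x i - (c + d) = (x i - c) + -d from fun i => by ring, add_pow, mul_sum]
  rw [sum_comm]
  exact sum_congr rfl fun j _ => sum_congr rfl fun i _ => by ring

/-- `E[(W - c)^k]` for the run count `W` of the `n + 1` trials `X_0, …, X_n`. -/
def runMoment (p : ℝ) (n : ℕ) (c : ℝ) (k : ℕ) : ℝ :=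
  ∑ ω : Fin (n + 1) → Bool, bernoulliSeqProb (n + 1) p ω * (runCount (n + 1) ω - c) ^ k

/-- `E[(1 - X_n) (W - c)^k]` for the run count `W` of the `n + 1` trials `X_0, …, X_n`. -/
def runMomentLastZero (p : ℝ) (n : ℕ) (c : ℝ) (k : ℕ) : ℝ :=
  ∑ ω : Fin (n + 1) → Bool,
    bernoulliSeqProb (n + 1) p ω * (1 - trialVal (n + 1) ω n) * (runCount (n + 1) ω - c) ^ k

section Moments

variable (p : ℝ)

theorem runMoment_zero (c : ℝ) (k : ℕ) : runMoment p 0 c k = (-c) ^ k := by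
  rw [runMoment, sum_pi_fin_succ_eq_sum_snoc]
  simp only [bernoulliSeqProb_snoc, Fintype.sum_bool, ↓reduceIte, Bool.false_eq_true]
  simp [runCount, bernoulliSeqProb, ← add_mul]

theorem runMomentLastZero_zero (c : ℝ) (k : ℕ) :
    runMomentLastZero p 0 c k = (1 - p) * (-c) ^ k := by
  rw [runMomentLastZero, sum_pi_fin_succ_eq_sum_snoc]
  simp only [bernoulliSeqProb_snoc, trialVal_snoc_self, Fintype.sum_bool, ↓reduceIte,
    Bool.false_eq_true]
  simp [runCount, bernoulliSeqProb]

/-- A new success adds a run exactly when the previous trial failed. -/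
theorem runMoment_succ (n : ℕ) (c : ℝ) (k : ℕ) :
    runMoment p (n + 1) c k
      = runMoment p n c k + p * (runMomentLastZero p n (c - 1) k - runMomentLastZero p n c k) := by
  simp only [runMoment, runMomentLastZero, sum_pi_fin_succ_eq_sum_snoc (n + 1), mul_sum,
    ← sum_add_distrib, ← sum_sub_distrib]
  refine sum_congr rfl fun ω _ => ?_
  simp only [Fintype.sum_bool, bernoulliSeqProb_snoc, runCount_snoc, ↓reduceIte,
    Bool.false_eq_true]
  rcases trialVal_eq_zero_or_one (n + 1) ω n with h | h <;> rw [h] <;> ring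

theorem runMomentLastZero_succ (n : ℕ) (c : ℝ) (k : ℕ) :
    runMomentLastZero p (n + 1) c k = (1 - p) * runMoment p n c k := by
  simp only [runMoment, runMomentLastZero, sum_pi_fin_succ_eq_sum_snoc (n + 1), mul_sum]
  refine sum_congr rfl fun ω _ => ?_
  simp only [Fintype.sum_bool, bernoulliSeqProb_snoc, runCount_snoc, trialVal_snoc_self,
    ↓reduceIte, Bool.false_eq_true]
  ring

theorem runMoment_add (n : ℕ) (c d : ℝ) (k : ℕ) :
    runMoment p n (c + d) k
      = ∑ i ∈ range (k + 1), (k.choose i : ℝ) * (-d) ^ (k - i) * runMoment p n c i :=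
  sum_mul_sub_add_pow _ _ _ c d k

theorem runMomentLastZero_add (n : ℕ) (c d : ℝ) (k : ℕ) :
    runMomentLastZero p n (c + d) k
      = ∑ i ∈ range (k + 1), (k.choose i : ℝ) * (-d) ^ (k - i) * runMomentLastZero p n c i :=
  sum_mul_sub_add_pow _ _ _ c d k

theorem runMoment_succ_add (n : ℕ) (c d : ℝ) (k : ℕ) :
    runMoment p (n + 1) (c + d) k
      = ∑ i ∈ range (k + 1), (k.choose i : ℝ) * ((-d) ^ (k - i) * runMoment p n c i
          + p * ((1 - d) ^ (k - i) - (-d) ^ (k - i)) * runMomentLastZero p n c i) := by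
  rw [runMoment_succ, show c + d - 1 = c + (d - 1) by ring, runMoment_add, runMomentLastZero_add,
    runMomentLastZero_add, ← sum_sub_distrib, mul_sum, ← sum_add_distrib]
  refine sum_congr rfl fun i _ => ?_
  rw [neg_sub]
  ring

theorem runMomentLastZero_succ_add (n : ℕ) (c d : ℝ) (k : ℕ) :
    runMomentLastZero p (n + 1) (c + d) k
      = (1 - p) * ∑ i ∈ range (k + 1), (k.choose i : ℝ) * (-d) ^ (k - i) * runMoment p n c i := by
  rw [runMomentLastZero_succ, runMoment_add]

theorem runMoment_pow_zero (n : ℕ) (c : ℝ) : runMoment p n c 0 = 1 := by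
  induction n with
  | zero => simp [runMoment_zero]
  | succ n ih => simpa [ih] using runMoment_succ_add p n c 0 0

theorem runMomentLastZero_pow_zero (n : ℕ) (c : ℝ) : runMomentLastZero p n c 0 = 1 - p := by
  cases n with
  | zero => simp [runMomentLastZero_zero]
  | succ n => rw [runMomentLastZero_succ, runMoment_pow_zero, mul_one]

variable {p} {a : ℝ}

theorem runMoment_mean (ha : a = p * (1 - p)) (n : ℕ) : runMoment p n (n * a) 1 = 0 := by
  induction n with
  | zero => simp [runMoment_zero]
  | succ n ih =>
    rw [Nat.cast_add_one, add_one_mul, runMoment_succ_add]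
    simp only [sum_range_succ, sum_range_zero, Nat.choose, ih, runMoment_pow_zero,
      runMomentLastZero_pow_zero]
    push_cast
    rw [ha]
    ring

theorem runMomentLastZero_one (ha : a = p * (1 - p)) {n : ℕ} (hn : 1 ≤ n) :
    runMomentLastZero p n (n * a) 1 = -((1 - p) * a) := by
  obtain ⟨n, rfl⟩ := Nat.exists_eq_add_of_le' hn
  rw [Nat.cast_add_one, add_one_mul, runMomentLastZero_succ_add]
  simp only [sum_range_succ, sum_range_zero, Nat.choose, runMoment_mean ha, runMoment_pow_zero]
  push_cast
  ring

theorem runMoment_two (ha : a = p * (1 - p)) {n : ℕ} (hn : 1 ≤ n) :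
    runMoment p n (n * a) 2 = n * a - (3 * n - 2) * a ^ 2 := by
  induction n, hn using Nat.le_induction with
  | base =>
    have h := runMoment_succ_add p 0 0 a 2
    simp only [zero_add] at h
    simp only [Nat.cast_one, one_mul, h, sum_range_succ, sum_range_zero, Nat.choose,
      runMoment_zero, runMomentLastZero_zero]
    push_cast
    rw [ha]
    ring
  | succ n hn ih =>
    rw [Nat.cast_add_one, add_one_mul, runMoment_succ_add]
    simp only [sum_range_succ, sum_range_zero, Nat.choose, ih, runMoment_mean ha,
      runMoment_pow_zero, runMomentLastZero_pow_zero, runMomentLastZero_one ha hn]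
    push_cast
    rw [ha]
    ring

theorem runMomentLastZero_two (ha : a = p * (1 - p)) {n : ℕ} (hn : 2 ≤ n) :
    runMomentLastZero p n (n * a) 2 = (1 - p) * ((n - 1) * a - 3 * (n - 2) * a ^ 2) := by
  obtain ⟨n, rfl⟩ := Nat.exists_eq_add_of_le' (one_le_two.trans hn)
  rw [Nat.cast_add_one, add_one_mul, runMomentLastZero_succ_add]
  simp only [sum_range_succ, sum_range_zero, Nat.choose, runMoment_mean ha, runMoment_pow_zero,
    runMoment_two ha (Nat.le_of_succ_le_succ hn)]
  push_cast
  ring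

theorem runMoment_succ_three (ha : a = p * (1 - p)) (n : ℕ) :
    runMoment p (n + 1) ((n + 1) * a) 3
      = runMoment p n (n * a) 3 - 3 * a * runMoment p n (n * a) 2 - a ^ 3
        + p * (3 * runMomentLastZero p n (n * a) 2
          + 3 * (1 - 2 * a) * runMomentLastZero p n (n * a) 1
          + (1 - 3 * a + 3 * a ^ 2) * (1 - p)) := by
  rw [add_one_mul, runMoment_succ_add]
  simp only [sum_range_succ, sum_range_zero, Nat.choose, runMoment_mean ha, runMoment_pow_zero,
    runMomentLastZero_pow_zero]
  push_cast
  ring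

theorem runMoment_three (ha : a = p * (1 - p)) {n : ℕ} (hn : 2 ≤ n) :
    runMoment p n (n * a) 3 = n * a + (6 - 9 * n) * a ^ 2 + (20 * n - 24) * a ^ 3 := by
  induction n, hn using Nat.le_induction with
  | base =>
    have h1 := runMoment_succ_three ha 0
    have h2 := runMoment_succ_three ha 1
    have hφ2 : runMomentLastZero p 1 a 2 = (1 - p) * a ^ 2 := by
      rw [runMomentLastZero_succ, runMoment_zero, neg_sq]
    have hvar := runMoment_two ha le_rfl
    have hφ1 := runMomentLastZero_one ha le_rfl
    norm_num [runMoment_zero, runMomentLastZero_zero] at h1 h2 hvar hφ1 ⊢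
    rw [h2, h1, hφ2, hvar, hφ1, ha]
    ring
  | succ n hn ih =>
    rw [Nat.cast_add_one, runMoment_succ_three ha, ih, runMoment_two ha (one_le_two.trans hn),
      runMomentLastZero_two ha hn, runMomentLastZero_one ha (one_le_two.trans hn), ha]
    ring

end Moments

theorem runs_third_central_moment_general (n : ℕ) (hn : 3 ≤ n) (pstar a : ℝ)
    (ha : a = pstar * (1 - pstar)) :
    (∑ ω : Fin n → Bool, bernoulliSeqProb n pstar ω *
        (runCount n ω - ((n : ℝ) - 1) * a) ^ 3)
      = ((n : ℝ) - 1) * a + (15 - 9 * (n : ℝ)) * a ^ 2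
        + 4 * (5 * (n : ℝ) - 11) * a ^ 3 := by
  obtain ⟨m, rfl⟩ := Nat.exists_eq_add_of_le' (by omega : 1 ≤ n)
  calc _ = runMoment pstar m (m * a) 3 := by
        rw [runMoment, Nat.cast_add_one, add_sub_cancel_right]
    _ = _ := by
        rw [runMoment_three ha (by omega)]
        push_cast
        ring

/-- Third central moment of the number of (1,1)-runs in `n` i.i.d.
Bernoulli(`p*`) trials: `E(W - EW)³ = (n-1)a + (15-9n)a² + 4(5n-11)a³`,
where `a = p*(1-p*)`. -/
theorem runs_third_central_moment (n : ℕ) (hn : 3 ≤ n) (pstar a : ℝ)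
    (hp : pstar ∈ Set.Ioo (0 : ℝ) 1) (ha : a = pstar * (1 - pstar)) :
    (∑ ω : Fin n → Bool, bernoulliSeqProb n pstar ω *
        (runCount n ω - ((n : ℝ) - 1) * a) ^ 3)
      = ((n : ℝ) - 1) * a + (15 - 9 * (n : ℝ)) * a ^ 2
        + 4 * (5 * (n : ℝ) - 11) * a ^ 3 :=
  runs_third_central_moment_general n hn pstar a ha
end

section
/- Let Y₁ ~ Poisson(α), Y₂ ~ Binomial(M, p) be independent, λ̂ = Mp + α, and T̂ ∈ ℤ≥0 with T̂ + 1 ≥ λ̂/p. Then P(Y₁ + Y₂ ≥ T̂ + 1) ≤ exp(−λ̂ ψ(p)) where ψ(p) = (−ln p − 1)/p + 1 > 0 for p ∈ (0,1). -/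
/-!
Exponential Markov inequality with `e^x = 1/p`. The generating function `∑ rⁿ P(Y₁ + Y₂ = n)` of
the convolution is the product of those of the two laws, `exp (α (r - 1))` and
`(q + p r)^M ≤ exp (M p (r - 1))`. Hence `P(Y₁ + Y₂ ≥ N) ≤ r⁻ᴺ exp (λ̂ (r - 1))`, and at
`r = 1/p` the condition `N ≥ λ̂/p` turns this into `exp (-λ̂ ψ(p))`.
-/

open Finset Real
open scoped Nat

lemma hasSum_pow_mul_poisson (α r : ℝ) :
    HasSum (fun i : ℕ => r ^ i * (α ^ i * exp (-α) / i !)) (exp (α * (r - 1))) := by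
  have h := (NormedSpace.expSeries_div_hasSum_exp (r * α)).mul_right (exp (-α))
  rw [← Real.exp_eq_exp_ℝ, ← Real.exp_add] at h
  rw [show α * (r - 1) = r * α + -α by ring]
  exact h.congr_fun fun i => by rw [mul_pow]; ring

lemma hasSum_pow_mul_binomial (M : ℕ) (p q r : ℝ) :
    HasSum (fun j : ℕ => r ^ j * ((M.choose j : ℝ) * p ^ j * q ^ (M - j))) ((p * r + q) ^ M) := by
  have hfin : (p * r + q) ^ M =
      ∑ j ∈ range (M + 1), r ^ j * ((M.choose j : ℝ) * p ^ j * q ^ (M - j)) := by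
    rw [add_pow]
    exact sum_congr rfl fun j _ => by ring
  rw [hfin]
  exact hasSum_sum_of_ne_finset_zero fun j hj => by
    simp [Nat.choose_eq_zero_of_lt (by simpa using hj : M < j)]

lemma one_add_pow_le_exp {x : ℝ} (hx : 0 ≤ 1 + x) (M : ℕ) : (1 + x) ^ M ≤ exp (M * x) := by
  rw [exp_nat_mul]
  exact pow_le_pow_left₀ hx (by linarith [add_one_le_exp x]) M

lemma hasSum_pow_mul_sum_range_mul {a b : ℕ → ℝ} {r A B : ℝ}
    (ha : HasSum (fun i => r ^ i * a i) A) (hb : HasSum (fun j => r ^ j * b j) B) :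
    HasSum (fun n => r ^ n * ∑ i ∈ range (n + 1), a i * b (n - i)) (A * B) := by
  rw [← ha.tsum_eq, ← hb.tsum_eq]
  refine (hasSum_sum_range_mul_of_summable_norm ha.summable.norm hb.summable.norm).congr_fun
    fun n => ?_
  rw [mul_sum]
  refine sum_congr rfl fun i hi => ?_
  rw [← pow_mul_pow_sub r (by simpa [Nat.lt_succ_iff] using hi)]
  ring

lemma pow_mul_tsum_nat_add_le {c : ℕ → ℝ} {r : ℝ} (hc : ∀ n, 0 ≤ c n) (hr : 1 ≤ r)
    (hsum : Summable fun n => r ^ n * c n) (N : ℕ) :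
    r ^ N * ∑' k, c (N + k) ≤ ∑' n, r ^ n * c n := by
  have hle : ∀ n, c n ≤ r ^ n * c n := fun n => le_mul_of_one_le_left (hc n) (one_le_pow₀ hr)
  have htail : Summable fun k => c (N + k) :=
    (hsum.of_nonneg_of_le hc hle).comp_injective (add_right_injective N)
  calc r ^ N * ∑' k, c (N + k) = ∑' k, r ^ N * c (N + k) := (htail.tsum_mul_left _).symm
    _ ≤ ∑' k, r ^ (N + k) * c (N + k) :=
        (htail.mul_left _).tsum_le_tsum
          (fun k => mul_le_mul_of_nonneg_right (pow_le_pow_right₀ hr (by omega)) (hc _))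
          (hsum.comp_injective (add_right_injective N))
    _ ≤ ∑' n, r ^ n * c n :=
        tsum_comp_le_tsum_of_inj hsum (fun n => mul_nonneg (by positivity) (hc n))
          (add_right_injective N)

lemma chernoff_exponent_pos {p : ℝ} (hp0 : 0 < p) (hp1 : p < 1) : 0 < (-log p - 1) / p + 1 := by
  have : (-log p - 1) / p + 1 = (p - 1 - log p) / p := by field_simp; ring
  rw [this]
  exact div_pos (by linarith [log_lt_sub_one_of_pos hp0 hp1.ne]) hp0

lemma pow_mul_exp_le_exp_chernoff {l p : ℝ} {N : ℕ} (hp0 : 0 < p) (hp1 : p ≤ 1)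
    (hN : l / p ≤ N) :
    p ^ N * exp (l * (p⁻¹ - 1)) ≤ exp (-l * ((-log p - 1) / p + 1)) := by
  rw [← exp_log (pow_pos hp0 N), ← exp_add, exp_le_exp, Real.log_pow]
  have hlog : log p ≤ 0 := log_nonpos hp0.le hp1
  have hgap : -l * ((-log p - 1) / p + 1) - (N * log p + l * (p⁻¹ - 1)) =
      -log p * (N - l / p) := by
    field_simp; ring
  linarith [mul_nonneg (neg_nonneg.2 hlog) (sub_nonneg.2 hN)]

theorem poisson_binomial_convolution_tail_bound_general (α : ℝ) (hα : 0 < α)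
    (M : ℕ) (p q : ℝ) (hp0 : 0 < p) (hp1 : p < 1) (hq : q = 1 - p)
    (T : ℕ) (hT : ((M : ℝ) * p + α) / p ≤ (T : ℝ) + 1) :
    (∑' k : ℕ,
      ∑ i ∈ Finset.range ((T + 1 + k) + 1),
        (α ^ i * Real.exp (-α) / (Nat.factorial i)) *
          ((M.choose (T + 1 + k - i) : ℝ) * p ^ (T + 1 + k - i) *
            q ^ (M - (T + 1 + k - i))))
      ≤ Real.exp (-((M : ℝ) * p + α) * ((-Real.log p - 1) / p + 1)) ∧
    0 < (-Real.log p - 1) / p + 1 := by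
  refine ⟨?_, chernoff_exponent_pos hp0 hp1⟩
  set c : ℕ → ℝ := fun n => ∑ i ∈ range (n + 1), (α ^ i * exp (-α) / i !) *
    ((M.choose (n - i) : ℝ) * p ^ (n - i) * q ^ (M - (n - i)))
  have hq0 : 0 ≤ q := by linarith
  have hc : ∀ n, 0 ≤ c n := fun n => sum_nonneg fun i _ => by positivity
  have hmgf := hasSum_pow_mul_sum_range_mul (hasSum_pow_mul_poisson α p⁻¹)
    (hasSum_pow_mul_binomial M p q p⁻¹)
  have hmarkov := pow_mul_tsum_nat_add_le hc ((one_le_inv₀ hp0).2 hp1.le) hmgf.summable (T + 1)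
  rw [hmgf.tsum_eq, mul_inv_cancel₀ hp0.ne'] at hmarkov
  calc ∑' k, c (T + 1 + k) = p ^ (T + 1) * (p⁻¹ ^ (T + 1) * ∑' k, c (T + 1 + k)) := by
        rw [← mul_assoc, ← mul_pow, mul_inv_cancel₀ hp0.ne', one_pow, one_mul]
    _ ≤ p ^ (T + 1) * (exp (α * (p⁻¹ - 1)) * exp (M * q)) := by
        refine mul_le_mul_of_nonneg_left (hmarkov.trans ?_) (by positivity)
        gcongr
        exact one_add_pow_le_exp (by linarith) M
    _ = p ^ (T + 1) * exp ((M * p + α) * (p⁻¹ - 1)) := by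
        rw [← exp_add, hq]; field_simp; ring_nf
    _ ≤ exp (-(M * p + α) * ((-log p - 1) / p + 1)) :=
        pow_mul_exp_le_exp_chernoff hp0 hp1.le (by push_cast; exact hT)

/-- Exponential tail bound for the convolution of a Poisson(α) and an independent
binomial `Bi(M,p)`: with `λ̂ = Mp + α` and `T̂ + 1 ≥ λ̂/p`,
`P(Y₁ + Y₂ ≥ T̂ + 1) ≤ exp(-λ̂ ψ(p))` where `ψ(p) = (-ln p - 1)/p + 1 > 0`. -/
theorem poisson_binomial_convolution_tail_bound (α : ℝ) (hα : 0 < α)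
    (M : ℕ) (hM : 0 < M) (p q : ℝ) (hp0 : 0 < p) (hp1 : p < 1) (hq : q = 1 - p)
    (T : ℕ) (hT : ((M : ℝ) * p + α) / p ≤ (T : ℝ) + 1) :
    (∑' k : ℕ,
      ∑ i ∈ Finset.range ((T + 1 + k) + 1),
        (α ^ i * Real.exp (-α) / (Nat.factorial i)) *
          ((M.choose (T + 1 + k - i) : ℝ) * p ^ (T + 1 + k - i) *
            q ^ (M - (T + 1 + k - i))))
      ≤ Real.exp (-((M : ℝ) * p + α) * ((-Real.log p - 1) / p + 1)) ∧
    0 < (-Real.log p - 1) / p + 1 :=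
  poisson_binomial_convolution_tail_bound_general α hα M p q hp0 hp1 hq T hT
end
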